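/- Soundness of NK± with respect to base-extension semantics: if Γ ⊢ φ in NK±, then Γ ⊩ φ, i.e., Γ ⊩_B φ for every base B. -/

import Mathlib

/-- Literals: assertions `pos c` and denials `neg c` of contents `c`. -/
inductive Lit (C : Type) : Type
  | pos : C → Lit C
  | neg : C → Lit C

/-- Dual literal: swaps assertion and denial. -/
def Lit.dual {C : Type} : Lit C → Lit C
  | .pos c => .neg c
  | .neg c => .pos c

/-- Formulas over literals. -/
inductive Form (C : Type) : Type
  | lit : Lit C → Form C
  | bot : Form C
  | top : Form C
  | and : Form C → Form C → Form C
  | or  : Form C → Form C → Form C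
  | imp : Form C → Form C → Form C

/-- The de Morgan dual operator on formulas. -/
def Form.dual {C : Type} : Form C → Form C
  | .lit l => .lit l.dual
  | .bot => .top
  | .top => .bot
  | .and φ ψ => .or φ.dual ψ.dual
  | .or φ ψ => .and φ.dual ψ.dual
  | .imp φ ψ => .and φ ψ.dual

/-- A valuation: maps literals to {0,1} with `v (neg c) = 1 - v (pos c)`. -/
structure Val (C : Type) where
  v : Lit C → ℕ
  le_one : ∀ l, v l ≤ 1
  dual_neg : ∀ c : C, v (Lit.neg c) = 1 - v (Lit.pos c)

/-- Truth-functional extension of a valuation to formulas. -/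
def Val.eval {C : Type} (v : Val C) : Form C → ℕ
  | .lit l => v.v l
  | .bot => 0
  | .top => 1
  | .and φ ψ => min (v.eval φ) (v.eval ψ)
  | .or φ ψ => max (v.eval φ) (v.eval ψ)
  | .imp φ ψ => max (1 - v.eval φ) (v.eval ψ)

/-- Classical consequence. -/
def Entails {C : Type} (Γ : Set (Form C)) (φ : Form C) : Prop :=
  ∀ v : Val C, (∀ γ ∈ Γ, v.eval γ = 1) → v.eval φ = 1

/-- The natural deduction system NK±: intuitionistic rules plus DM and EXC. -/
inductive NK {C : Type} : Set (Form C) → Form C → Prop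
  | hyp {Γ} {φ : Form C} : φ ∈ Γ → NK Γ φ
  | topI {Γ} : NK Γ .top
  | botE {Γ} {φ : Form C} : NK Γ .bot → NK Γ φ
  | impI {Γ} {φ ψ : Form C} : NK (insert φ Γ) ψ → NK Γ (.imp φ ψ)
  | impE {Γ} {φ ψ : Form C} : NK Γ (.imp φ ψ) → NK Γ φ → NK Γ ψ
  | andI {Γ} {φ ψ : Form C} : NK Γ φ → NK Γ ψ → NK Γ (.and φ ψ)
  | andE1 {Γ} {φ ψ : Form C} : NK Γ (.and φ ψ) → NK Γ φ
  | andE2 {Γ} {φ ψ : Form C} : NK Γ (.and φ ψ) → NK Γ ψ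
  | orI1 {Γ} {φ ψ : Form C} : NK Γ φ → NK Γ (.or φ ψ)
  | orI2 {Γ} {φ ψ : Form C} : NK Γ ψ → NK Γ (.or φ ψ)
  | orE {Γ} {φ ψ χ : Form C} :
      NK Γ (.or φ ψ) → NK (insert φ Γ) χ → NK (insert ψ Γ) χ → NK Γ χ
  | dm {Γ} {φ : Form C} : NK (insert φ Γ) .bot → NK Γ φ.dual
  | exc {Γ} {φ : Form C} : NK Γ φ → NK Γ φ.dual → NK Γ .bot

/-- An atomic rule `(L₁⇒l₁),…,(Lₙ⇒lₙ) ⇒ l` (the case of an empty premiss list,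
together with `APP₁`/`APP₂`, covers both forms of atomic rule). -/
structure AtomicRule (C : Type) where
  prems : List (Set (Lit C) × Lit C)
  concl : Lit C

/-- A base is a set of atomic rules. -/
abbrev Base (C : Type) := Set (AtomicRule C)

/-- Derivability in a base.  Conclusions are `some l` (a literal) or `none` (⊥).
Closed under REF, APP₁/APP₂, ABS and DM. -/
inductive Deriv {C : Type} (B : Base C) : Set (Lit C) → Option (Lit C) → Prop
  | ref {L} {l : Lit C} : l ∈ L → Deriv B L (some l)
  | app {L} (r : AtomicRule C) : r ∈ B →
      (∀ p ∈ r.prems, Deriv B (p.1 ∪ L) (some p.2)) → Deriv B L (some r.concl)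
  | abs {L} {l : Lit C} : Deriv B L (some l) → Deriv B L (some l.dual) →
      Deriv B L none
  | dm {L} {l : Lit C} : Deriv B (insert l L) none → Deriv B L (some l.dual)

/-- Support in a base (empty context). -/
def Supp {C : Type} (B : Base C) : Form C → Prop
  | .lit l => Deriv B ∅ (some l)
  | .bot => ∀ l : Lit C, Deriv B ∅ (some l)
  | .top => True
  | .and φ ψ => Supp B φ ∧ Supp B ψ
  | .or φ ψ => ∀ X : Base C, B ⊆ X → ∀ l : Lit C,
      (∀ Y : Base C, X ⊆ Y → Supp Y φ → Deriv Y ∅ (some l)) →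
      (∀ Y : Base C, X ⊆ Y → Supp Y ψ → Deriv Y ∅ (some l)) →
      Deriv X ∅ (some l)
  | .imp φ ψ => ∀ X : Base C, B ⊆ X → Supp X φ → Supp X ψ

/-- Support with a context: `Γ ⊩_B φ`. -/
def SuppCtx {C : Type} (B : Base C) (Γ : Set (Form C)) (φ : Form C) : Prop :=
  ∀ X : Base C, B ⊆ X → (∀ γ ∈ Γ, Supp X γ) → Supp X φ

/-- Validity: support in every base. -/
def Valid {C : Type} (Γ : Set (Form C)) (φ : Form C) : Prop :=
  ∀ B : Base C, SuppCtx B Γ φ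


/-!
Soundness is proved by induction on the derivation, with respect to every base. Support is
monotone under base extension, `⊥` supports everything, and `∨`-elimination, which the clause
for `∨` only grants for literal conclusions, lifts to all conclusions by induction on them.
For EXC, a formula and its dual jointly support `⊥`, by induction on the formula.

The heart is DM: if every extension of `X` supporting `φ` supports `⊥`, then `X` supports `φ⊥`.
For a literal `l`, add `l` to `X` as a fact; the extension derives `⊥`, the fact becomes a
hypothesis, and the base's own DM rule yields `l⊥`. The same trick, with the fact `l⊥`, shows that
a disjunction is supported as soon as refuting both disjuncts is absurd, which settles the duals
of conjunctions and disjunctions.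
-/

variable {C : Type}

theorem Lit.dual_dual (l : Lit C) : l.dual.dual = l := by cases l <;> rfl

def AtomicRule.fact (l : Lit C) : AtomicRule C := ⟨[], l⟩

namespace Deriv

theorem mono_base {B B' : Base C} {L : Set (Lit C)} {o : Option (Lit C)} (hBB' : B ⊆ B')
    (h : Deriv B L o) : Deriv B' L o := by
  induction h with
  | ref h => exact .ref h
  | app r hr _ ih => exact .app r (hBB' hr) ih
  | abs _ _ ih₁ ih₂ => exact .abs ih₁ ih₂
  | dm _ ih => exact .dm ih

theorem mono_hyps {B : Base C} {L L' : Set (Lit C)} {o : Option (Lit C)} (hLL' : L ⊆ L')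
    (h : Deriv B L o) : Deriv B L' o := by
  induction h generalizing L' with
  | ref h => exact .ref (hLL' h)
  | app r hr _ ih => exact .app r hr fun p hp => ih p hp (Set.union_subset_union_right _ hLL')
  | abs _ _ ih₁ ih₂ => exact .abs (ih₁ hLL') (ih₂ hLL')
  | dm _ ih => exact .dm (ih (Set.insert_subset_insert hLL'))

theorem of_none {B : Base C} {L : Set (Lit C)} (h : Deriv B L none) (l : Lit C) :
    Deriv B L (some l) := by
  simpa only [Lit.dual_dual] using
    (Deriv.dm (h.mono_hyps (Set.subset_insert l.dual L)) : Deriv B L (some l.dual.dual))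

theorem fact (B : Base C) (L : Set (Lit C)) (l : Lit C) :
    Deriv (insert (AtomicRule.fact l) B) L (some l) :=
  .app (.fact l) (Set.mem_insert _ _) fun _ hp => (List.not_mem_nil hp).elim

theorem insert_hyp_of_insert_fact {B : Base C} {l : Lit C} {L : Set (Lit C)} {o : Option (Lit C)}
    (h : Deriv (insert (AtomicRule.fact l) B) L o) : Deriv B (insert l L) o := by
  induction h with
  | ref h => exact .ref (Set.mem_insert_of_mem _ h)
  | app r hr _ ih =>
    rcases Set.mem_insert_iff.mp hr with rfl | hr
    · exact .ref (Set.mem_insert _ _)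
    · exact .app r hr fun p hp => Set.union_insert ▸ ih p hp
  | abs _ _ ih₁ ih₂ => exact .abs ih₁ ih₂
  | dm _ ih => exact .dm (Set.insert_comm _ _ _ ▸ ih)

end Deriv

namespace Supp

theorem mono {B X : Base C} {φ : Form C} (hBX : B ⊆ X) (h : Supp B φ) : Supp X φ := by
  induction φ generalizing B X with
  | lit l => exact Deriv.mono_base hBX h
  | bot => exact fun l => (h l).mono_base hBX
  | top => trivial
  | and φ ψ ihφ ihψ => exact ⟨ihφ hBX h.1, ihψ hBX h.2⟩
  | or => exact fun Y hXY => h Y (hBX.trans hXY)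
  | imp => exact fun Y hXY => h Y (hBX.trans hXY)

theorem bot_of_deriv_none {B : Base C} (h : Deriv B ∅ none) : Supp B .bot :=
  h.of_none

theorem deriv_none_of_bot {B : Base C} (h : Supp B .bot) (l : Lit C) : Deriv B ∅ none :=
  .abs (h l) (h l.dual)

theorem of_bot {B : Base C} {φ : Form C} (h : Supp B .bot) : Supp B φ := by
  induction φ generalizing B with
  | lit l => exact h l
  | bot => exact h
  | top => trivial
  | and φ ψ ihφ ihψ => exact ⟨ihφ h, ihψ h⟩
  | or => exact fun X hBX l _ _ => (h l).mono_base hBX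
  | imp _ _ _ ihψ => exact fun X hBX _ => ihψ (h.mono hBX)

theorem or_inl {B : Base C} {φ ψ : Form C} (h : Supp B φ) : Supp B (.or φ ψ) :=
  fun X hBX _ hφ _ => hφ X subset_rfl (h.mono hBX)

theorem or_inr {B : Base C} {φ ψ : Form C} (h : Supp B ψ) : Supp B (.or φ ψ) :=
  fun X hBX _ _ hψ => hψ X subset_rfl (h.mono hBX)

theorem or_elim {X : Base C} {φ ψ χ : Form C} (hor : Supp X (.or φ ψ))
    (hφ : ∀ Y, X ⊆ Y → Supp Y φ → Supp Y χ) (hψ : ∀ Y, X ⊆ Y → Supp Y ψ → Supp Y χ) :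
    Supp X χ := by
  induction χ generalizing X with
  | lit l => exact hor X subset_rfl l hφ hψ
  | bot =>
    exact fun l => hor X subset_rfl l (fun Y hXY h => hφ Y hXY h l) (fun Y hXY h => hψ Y hXY h l)
  | top => trivial
  | and χ₁ χ₂ ih₁ ih₂ =>
    exact ⟨ih₁ hor (fun Y hXY h => (hφ Y hXY h).1) (fun Y hXY h => (hψ Y hXY h).1),
      ih₂ hor (fun Y hXY h => (hφ Y hXY h).2) (fun Y hXY h => (hψ Y hXY h).2)⟩
  | imp χ₁ χ₂ _ ih₂ =>
    intro Y hXY h₁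
    exact ih₂ (hor.mono hXY)
      (fun Z hYZ h => hφ Z (hXY.trans hYZ) h Z subset_rfl (h₁.mono hYZ))
      (fun Z hYZ h => hψ Z (hXY.trans hYZ) h Z subset_rfl (h₁.mono hYZ))
  | or =>
    intro Y hXY l h₁ h₂
    exact hor Y hXY l
      (fun Z hYZ h => hφ Z (hXY.trans hYZ) h Z subset_rfl l
        (fun W hZW => h₁ W (hYZ.trans hZW)) (fun W hZW => h₂ W (hYZ.trans hZW)))
      (fun Z hYZ h => hψ Z (hXY.trans hYZ) h Z subset_rfl l
        (fun W hZW => h₁ W (hYZ.trans hZW)) (fun W hZW => h₂ W (hYZ.trans hZW)))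

theorem bot_of_dual {X : Base C} {φ : Form C} (h : Supp X φ) (hd : Supp X φ.dual) :
    Supp X .bot := by
  induction φ generalizing X with
  | lit => exact bot_of_deriv_none (.abs h hd)
  | bot => exact h
  | top => exact hd
  | and φ ψ ihφ ihψ =>
    exact fun l => hd X subset_rfl l (fun Y hXY h' => ihφ (h.1.mono hXY) h' l)
      (fun Y hXY h' => ihψ (h.2.mono hXY) h' l)
  | or φ ψ ihφ ihψ =>
    exact fun l => h X subset_rfl l (fun Y hXY h' => ihφ h' (hd.1.mono hXY) l)
      (fun Y hXY h' => ihψ h' (hd.2.mono hXY) l)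
  | imp _ _ _ ihψ => exact ihψ (h X subset_rfl hd.1) hd.2

end Supp

def Refuted (X : Base C) (φ : Form C) : Prop :=
  ∀ Y : Base C, X ⊆ Y → Supp Y φ → Supp Y .bot

theorem Deriv.dual_of_bot_insert_fact {X : Base C} {l : Lit C}
    (h : Supp (insert (AtomicRule.fact l) X) .bot) : Deriv X ∅ (some l.dual) :=
  .dm (Deriv.insert_hyp_of_insert_fact (Supp.deriv_none_of_bot h l))

theorem Refuted.deriv_dual {X : Base C} {l : Lit C} (h : Refuted X (.lit l)) :
    Deriv X ∅ (some l.dual) :=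
  Deriv.dual_of_bot_insert_fact (h _ (Set.subset_insert _ _) (Deriv.fact X ∅ l))

theorem Supp.or_of_refuted {X : Base C} {φ ψ : Form C}
    (h : ∀ Y, X ⊆ Y → Refuted Y φ → Refuted Y ψ → Supp Y .bot) : Supp X (.or φ ψ) := by
  intro X' hXX' l hφ hψ
  set Y := insert (AtomicRule.fact l.dual) X'
  have hX'Y : X' ⊆ Y := Set.subset_insert _ _
  have refute : ∀ χ : Form C, (∀ Z, X' ⊆ Z → Supp Z χ → Deriv Z ∅ (some l)) → Refuted Y χ :=
    fun χ hχ Z hYZ h => Supp.bot_of_deriv_none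
      (.abs (hχ Z (hX'Y.trans hYZ) h) ((Deriv.fact X' ∅ l.dual).mono_base hYZ))
  simpa only [Lit.dual_dual] using
    Deriv.dual_of_bot_insert_fact (h Y (hXX'.trans hX'Y) (refute φ hφ) (refute ψ hψ))

theorem Supp.dual_of_refuted_and_of_refuted_dual (φ : Form C) (X : Base C) :
    (Refuted X φ → Supp X φ.dual) ∧ (Refuted X φ.dual → Supp X φ) := by
  induction φ generalizing X with
  | lit l =>
    refine ⟨Refuted.deriv_dual, fun h => ?_⟩
    have hl : Deriv X ∅ (some l.dual.dual) := Refuted.deriv_dual h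
    rwa [Lit.dual_dual] at hl
  | bot => exact ⟨fun _ => trivial, fun h => h X subset_rfl trivial⟩
  | top => exact ⟨fun h => h X subset_rfl trivial, fun _ => trivial⟩
  | and φ ψ ihφ ihψ =>
    refine ⟨fun h => or_of_refuted fun Y hXY hφ hψ =>
      h Y hXY ⟨(ihφ Y).2 hφ, (ihψ Y).2 hψ⟩, fun h => ⟨?_, ?_⟩⟩
    · exact (ihφ X).2 fun Y hXY hφ => h Y hXY (or_inl hφ)
    · exact (ihψ X).2 fun Y hXY hψ => h Y hXY (or_inr hψ)
  | or φ ψ ihφ ihψ =>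
    refine ⟨fun h => ⟨?_, ?_⟩, fun h => or_of_refuted fun Y hXY hφ hψ =>
      h Y hXY ⟨(ihφ Y).1 hφ, (ihψ Y).1 hψ⟩⟩
    · exact (ihφ X).1 fun Y hXY hφ => h Y hXY (or_inl hφ)
    · exact (ihψ X).1 fun Y hXY hψ => h Y hXY (or_inr hψ)
  | imp φ ψ ihφ ihψ =>
    refine ⟨fun h => ⟨?_, ?_⟩, fun h Y hXY hφ => ?_⟩
    · exact (ihφ X).2 fun Y hXY hφd =>
        h Y hXY fun Z hYZ hφ => of_bot (bot_of_dual hφ (hφd.mono hYZ))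
    · exact (ihψ X).1 fun Y hXY hψ => h Y hXY fun Z hYZ _ => hψ.mono hYZ
    · exact (ihψ Y).2 fun Z hYZ hψd => h Z (hXY.trans hYZ) ⟨hφ.mono hYZ, hψd⟩

theorem Refuted.supp_dual {X : Base C} {φ : Form C} (h : Refuted X φ) : Supp X φ.dual :=
  (Supp.dual_of_refuted_and_of_refuted_dual φ X).1 h

theorem forall_supp_insert {Γ : Set (Form C)} {X Y : Base C} {φ : Form C} (hXY : X ⊆ Y)
    (hΓ : ∀ γ ∈ Γ, Supp X γ) (hφ : Supp Y φ) : ∀ γ ∈ insert φ Γ, Supp Y γ := by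
  rintro γ (rfl | hγ)
  exacts [hφ, (hΓ γ hγ).mono hXY]

theorem NK.supp {Γ : Set (Form C)} {φ : Form C} (h : NK Γ φ) (X : Base C)
    (hΓ : ∀ γ ∈ Γ, Supp X γ) : Supp X φ := by
  induction h generalizing X with
  | hyp hφ => exact hΓ _ hφ
  | topI => trivial
  | botE _ ih => exact Supp.of_bot (ih X hΓ)
  | impI _ ih => exact fun Y hXY hφ => ih Y (forall_supp_insert hXY hΓ hφ)
  | impE _ _ ih₁ ih₂ => exact ih₁ X hΓ X subset_rfl (ih₂ X hΓ)
  | andI _ _ ih₁ ih₂ => exact ⟨ih₁ X hΓ, ih₂ X hΓ⟩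
  | andE1 _ ih => exact (ih X hΓ).1
  | andE2 _ ih => exact (ih X hΓ).2
  | orI1 _ ih => exact Supp.or_inl (ih X hΓ)
  | orI2 _ ih => exact Supp.or_inr (ih X hΓ)
  | orE _ _ _ ih ih₁ ih₂ =>
    exact Supp.or_elim (ih X hΓ) (fun Y hXY hφ => ih₁ Y (forall_supp_insert hXY hΓ hφ))
      (fun Y hXY hψ => ih₂ Y (forall_supp_insert hXY hΓ hψ))
  | dm _ ih => exact Refuted.supp_dual fun Y hXY hφ => ih Y (forall_supp_insert hXY hΓ hφ)
  | exc _ _ ih₁ ih₂ => exact Supp.bot_of_dual (ih₁ X hΓ) (ih₂ X hΓ)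

/-- soundness of NK± w.r.t. base-extension semantics. -/
theorem NK_sound_BeS {C : Type} (Γ : Set (Form C)) (φ : Form C) (h : NK Γ φ) :
    Valid Γ φ :=
  fun _ X _ hΓ => h.supp X hΓ
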